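/- Let Δ be a pure simplicial complex, σ ∈ Δ a face of dimension d−1 ≥ 1, and Δ_σ the stellar subdivision of Δ on σ. Then the h-polynomials satisfy h(Δ_σ, t) = h(Δ, t) + (t + t² + ... + t^{d−1})·h(lk_Δ(σ), t). -/

import Mathlib

set_option synthInstance.maxHeartbeats 1000000
set_option maxHeartbeats 1000000

open MvPolynomial
/-- An (abstract) simplicial complex on the vertex set `{1, …, m}` (modeled as `Fin m`):
a collection of finite subsets containing all singletons and closed under taking subsets. -/
def IsComplex {m : ℕ} (Δ : Set (Finset (Fin m))) : Prop :=
  (∀ i : Fin m, {i} ∈ Δ) ∧ ∀ ⦃s⦄, s ∈ Δ → ∀ ⦃t : Finset (Fin m)⦄, t ⊆ s → t ∈ Δ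

/-- Facets: faces maximal under inclusion. -/
def IsFacet {m : ℕ} (Δ : Set (Finset (Fin m))) (τ : Finset (Fin m)) : Prop :=
  τ ∈ Δ ∧ ∀ ρ ∈ Δ, τ ⊆ ρ → τ = ρ

/-- A complex is pure if all facets have the same cardinality. -/
def IsPure {m : ℕ} (Δ : Set (Finset (Fin m))) : Prop :=
  ∀ τ ρ, IsFacet Δ τ → IsFacet Δ ρ → τ.card = ρ.card

/-- The link of a face `σ`. -/
def link {m : ℕ} (Δ : Set (Finset (Fin m))) (σ : Finset (Fin m)) :
    Set (Finset (Fin m)) :=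
  {τ | Disjoint τ σ ∧ τ ∪ σ ∈ Δ}

/-- One more than the dimension of `Δ`: the largest cardinality of a face. -/
noncomputable def topCard {m : ℕ} (Δ : Set (Finset (Fin m))) : ℕ :=
  sSup ((fun σ : Finset (Fin m) => σ.card) '' Δ)

/-- The stellar subdivision of `Δ` on `σ`, a complex on `{1, …, m+1}` with new vertex
`m+1` (modeled as `Fin.last m`). -/
def stellar {m : ℕ} (Δ : Set (Finset (Fin m))) (σ : Finset (Fin m)) :
    Set (Finset (Fin (m + 1))) :=
  ((fun τ : Finset (Fin m) => τ.image Fin.castSucc) '' {τ ∈ Δ | ¬ σ ⊆ τ}) ∪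
  ((fun τ : Finset (Fin m) => insert (Fin.last m) (τ.image Fin.castSucc)) ''
    {τ | τ ∈ Δ ∧ ¬ σ ⊆ τ ∧ τ ∪ σ ∈ Δ})

/-- The number of faces of `Γ` of cardinality `c`, with the convention that the
empty face is always counted (`f_{−1} = 1`). -/
noncomputable def fcard {m : ℕ} (Γ : Set (Finset (Fin m))) (c : ℕ) : ℕ :=
  if c = 0 then 1 else {σ : Finset (Fin m) | σ ∈ Γ ∧ σ.card = c}.ncard

/-- The `h`-polynomial `h(Γ,t) = Σ_{i=0}^{n} f_{i−1}(Γ) tⁱ (1−t)^{n−i}` of an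
`(n−1)`-dimensional complex `Γ` (so `n = topCard Γ`), as a polynomial over `ℤ`. -/
noncomputable def hPoly {m : ℕ} (Γ : Set (Finset (Fin m))) : Polynomial ℤ :=
  ∑ i ∈ Finset.range (topCard Γ + 1),
    (fcard Γ i : ℤ) • (Polynomial.X ^ i * (1 - Polynomial.X) ^ (topCard Γ - i))

/-!
Write `h(Γ)` as a sum over the faces `τ` of `Γ` of `X^|τ| (1 - X)^(n - |τ|)`. The faces of `Δ`
are those not containing `σ`, contributing some `A`, and the faces `ρ ∪ σ` with `ρ` in the link,
so `h(Δ) = A + X^d h(lk σ)`. Since `Δ_σ` has the same dimension as `Δ`, its faces not containing the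
new vertex contribute the same `A`; the others are the cones over the faces of the join
`∂σ * lk σ`, contributing `X (∑_{α ⊊ σ} X^|α| (1 - X)^(d - 1 - |α|)) h(lk σ)`. By the binomial
theorem that sum over `α` is `1 + X + ⋯ + X^(d-1)`.
-/

open Finset
open scoped Polynomial

section Faces

variable {m : ℕ}

noncomputable def faceFinset (Γ : Set (Finset (Fin m))) : Finset (Finset (Fin m)) :=
  (Set.toFinite Γ).toFinset

@[simp]
theorem mem_faceFinset {Γ : Set (Finset (Fin m))} {τ : Finset (Fin m)} :
    τ ∈ faceFinset Γ ↔ τ ∈ Γ :=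
  Set.Finite.mem_toFinset _

theorem card_le_topCard {Γ : Set (Finset (Fin m))} {τ : Finset (Fin m)} (hτ : τ ∈ Γ) :
    #τ ≤ topCard Γ :=
  le_csSup ((Set.toFinite Γ).image _).bddAbove ⟨τ, hτ, rfl⟩

theorem topCard_eq_of_forall_card_le {Γ : Set (Finset (Fin m))} {τ : Finset (Fin m)} {n : ℕ}
    (hτ : τ ∈ Γ) (hτn : #τ = n) (hle : ∀ ρ ∈ Γ, #ρ ≤ n) : topCard Γ = n :=
  le_antisymm (csSup_le ⟨_, τ, hτ, rfl⟩ (by rintro _ ⟨ρ, hρ, rfl⟩; exact hle ρ hρ))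
    (hτn ▸ card_le_topCard hτ)

theorem exists_isFacet_superset {Δ : Set (Finset (Fin m))} {σ : Finset (Fin m)} (hσ : σ ∈ Δ) :
    ∃ τ, IsFacet Δ τ ∧ σ ⊆ τ := by
  obtain ⟨τ, hστ, hτ, hmax⟩ := (Set.toFinite Δ).exists_le_maximal hσ
  exact ⟨τ, ⟨hτ, fun ρ hρ hτρ => le_antisymm hτρ (hmax hρ hτρ)⟩, hστ⟩

theorem exists_superset_card_eq_topCard {Δ : Set (Finset (Fin m))} (hpure : IsPure Δ)
    {σ : Finset (Fin m)} (hσ : σ ∈ Δ) : ∃ τ ∈ Δ, σ ⊆ τ ∧ #τ = topCard Δ := by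
  obtain ⟨ρ, hρ, hρcard⟩ : topCard Δ ∈ card '' Δ :=
    Set.Nonempty.csSup_mem ⟨_, σ, hσ, rfl⟩ ((Set.toFinite Δ).image _)
  obtain ⟨ρ', hρ', hρρ'⟩ := exists_isFacet_superset hρ
  obtain ⟨τ, hτ, hστ⟩ := exists_isFacet_superset hσ
  refine ⟨τ, hτ.1, hστ, hpure τ ρ' hτ hρ' ▸ le_antisymm (card_le_topCard hρ'.1) ?_⟩
  exact hρcard ▸ card_le_card hρρ'

theorem fcard_eq_card_filter {Γ : Set (Finset (Fin m))} (hΓ : ∅ ∈ Γ) (i : ℕ) :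
    fcard Γ i = #{τ ∈ faceFinset Γ | #τ = i} := by
  rcases i with _ | i
  · rw [fcard, if_pos rfl, eq_comm, card_eq_one]
    exact ⟨∅, by ext; simpa using fun h => h ▸ hΓ⟩
  · rw [fcard, if_neg i.succ_ne_zero, ← Set.ncard_coe_finset]
    congr
    ext
    simp

theorem hPoly_eq_sum_faceFinset {Γ : Set (Finset (Fin m))} (hΓ : ∅ ∈ Γ) :
    hPoly Γ =
      ∑ τ ∈ faceFinset Γ, (Polynomial.X : ℤ[X]) ^ #τ * (1 - Polynomial.X) ^ (topCard Γ - #τ) := by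
  classical
  rw [← sum_fiberwise_of_maps_to (g := card) (t := range (topCard Γ + 1))
    fun τ hτ => mem_range_succ_iff.2 (card_le_topCard (mem_faceFinset.1 hτ))]
  refine sum_congr rfl fun i _ => ?_
  rw [fcard_eq_card_filter hΓ, sum_congr rfl fun τ hτ => by rw [(mem_filter.1 hτ).2], sum_const,
    Nat.cast_smul_eq_nsmul]

end Faces

section Link

variable {m : ℕ} {Δ : Set (Finset (Fin m))} {σ : Finset (Fin m)}

theorem empty_mem_link (hσ : σ ∈ Δ) : ∅ ∈ link Δ σ :=
  ⟨disjoint_empty_left σ, by rwa [empty_union]⟩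

theorem card_add_card_le_topCard_of_mem_link {ρ : Finset (Fin m)} (hρ : ρ ∈ link Δ σ) :
    #ρ + #σ ≤ topCard Δ :=
  card_union_of_disjoint hρ.1 ▸ card_le_topCard hρ.2

theorem topCard_link (hpure : IsPure Δ) (hσ : σ ∈ Δ) : topCard (link Δ σ) = topCard Δ - #σ := by
  obtain ⟨τ, hτ, hστ, hτcard⟩ := exists_superset_card_eq_topCard hpure hσ
  refine topCard_eq_of_forall_card_le (τ := τ \ σ)
    ⟨sdiff_disjoint, by rwa [sdiff_union_of_subset hστ]⟩
    (by rw [card_sdiff_of_subset hστ, hτcard]) fun ρ hρ => ?_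
  have := card_add_card_le_topCard_of_mem_link hρ
  omega

theorem sum_faceFinset_eq_add_sum_link {M : Type*} [AddCommMonoid M] (f : Finset (Fin m) → M) :
    ∑ τ ∈ faceFinset Δ, f τ =
      ∑ τ ∈ faceFinset Δ with ¬σ ⊆ τ, f τ + ∑ ρ ∈ faceFinset (link Δ σ), f (ρ ∪ σ) := by
  rw [← sum_filter_not_add_sum_filter _ (σ ⊆ ·)]
  congr 1
  refine sum_nbij' (· \ σ) (· ∪ σ) ?_ ?_ ?_ ?_ ?_ <;>
    simp +contextual [link, sdiff_disjoint, union_sdiff_cancel_right]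
  · exact fun τ hτ hστ => by rwa [union_eq_left.2 hστ]
  · exact fun τ _ hστ => by rw [union_eq_left.2 hστ]

end Link

section Join

variable {m : ℕ} {Δ : Set (Finset (Fin m))} {σ : Finset (Fin m)}

open scoped Classical in
/-- `τ ↦ (τ ∩ σ, τ \ σ)` identifies the faces `τ` with `σ ⊄ τ` and `τ ∪ σ ∈ Δ` with the join
`∂σ * lk σ`. -/
theorem sum_filter_eq_sum_ssubset_sum_link (hΔ : IsComplex Δ) {M : Type*} [AddCommMonoid M]
    (f : Finset (Fin m) → M) :
    ∑ τ ∈ faceFinset Δ with ¬σ ⊆ τ ∧ τ ∪ σ ∈ Δ, f τ =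
      ∑ α ∈ σ.powerset.erase σ, ∑ ρ ∈ faceFinset (link Δ σ), f (α ∪ ρ) := by
  rw [← sum_product']
  refine sum_nbij' (fun τ => (τ ∩ σ, τ \ σ)) (fun p => p.1 ∪ p.2) ?_ ?_ ?_ ?_ ?_
  · simp only [mem_filter, mem_faceFinset, mem_product, mem_erase, mem_powerset, link,
      Set.mem_ofPred_eq, Ne, inter_eq_right, sdiff_union_self_eq_union]
    exact fun τ ⟨_, hστ, hτσ⟩ => ⟨⟨hστ, inter_subset_right⟩, sdiff_disjoint, hτσ⟩
  · simp only [mem_product, mem_erase, mem_powerset, mem_faceFinset, mem_filter]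
    rintro ⟨α, ρ⟩ ⟨⟨hασ, hα⟩, hρσ, hρ⟩
    have hαρσ : α ∪ ρ ∪ σ = ρ ∪ σ := by rw [union_right_comm, union_eq_right.2 hα, union_comm]
    refine ⟨hΔ.2 hρ (union_subset (hα.trans subset_union_right) subset_union_left),
      fun hσαρ => hασ (subset_antisymm hα fun x hx => ?_), hαρσ ▸ hρ⟩
    exact (mem_union.1 (hσαρ hx)).resolve_right fun hxρ => disjoint_left.1 hρσ hxρ hx
  · exact fun τ _ => by rw [union_comm, sdiff_union_inter]
  · simp only [mem_product, mem_erase, mem_powerset, mem_faceFinset]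
    rintro ⟨α, ρ⟩ ⟨⟨-, hα⟩, hρσ, -⟩
    rw [union_inter_distrib_right, inter_eq_left.2 hα, disjoint_iff_inter_eq_empty.1 hρσ,
      union_empty, union_sdiff_distrib, sdiff_eq_empty_iff_subset.2 hα, empty_union,
      sdiff_eq_self_of_disjoint hρσ]
  · exact fun τ _ => by rw [union_comm, sdiff_union_inter]

end Join

section Stellar

variable {m : ℕ} {Δ : Set (Finset (Fin m))} {σ : Finset (Fin m)}

theorem card_image_castSucc (τ : Finset (Fin m)) : #(τ.image Fin.castSucc) = #τ :=
  card_image_of_injective _ (Fin.castSucc_injective m)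

theorem last_notMem_image_castSucc (τ : Finset (Fin m)) : Fin.last m ∉ τ.image Fin.castSucc := by
  simp [Fin.castSucc_ne_last]

theorem card_insert_last_image_castSucc (τ : Finset (Fin m)) :
    #(insert (Fin.last m) (τ.image Fin.castSucc)) = #τ + 1 := by
  rw [card_insert_of_notMem (last_notMem_image_castSucc τ), card_image_castSucc]

theorem empty_mem_stellar (hΔ : IsComplex Δ) (hσ : σ ∈ Δ) (hσ₀ : σ.Nonempty) :
    ∅ ∈ stellar Δ σ :=
  Or.inl ⟨∅, ⟨hΔ.2 hσ (empty_subset σ), fun h => hσ₀.ne_empty (subset_empty.1 h)⟩, image_empty _⟩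

theorem topCard_stellar (hΔ : IsComplex Δ) (hpure : IsPure Δ) (hσ : σ ∈ Δ) (hσ₀ : σ.Nonempty) :
    topCard (stellar Δ σ) = topCard Δ := by
  obtain ⟨τ, hτ, hστ, hτcard⟩ := exists_superset_card_eq_topCard hpure hσ
  obtain ⟨x, hx⟩ := hσ₀
  have hxτ : x ∈ τ := hστ hx
  refine topCard_eq_of_forall_card_le (τ := insert (Fin.last m) ((τ.erase x).image Fin.castSucc))
    (Or.inr ⟨τ.erase x, ⟨hΔ.2 hτ (erase_subset x τ), fun h => notMem_erase x τ (h hx), ?_⟩, rfl⟩)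
    ?_ ?_
  · rwa [erase_union_of_mem hx, union_eq_left.2 hστ]
  · rw [card_insert_last_image_castSucc, card_erase_add_one hxτ, hτcard]
  · rintro _ (⟨ρ, ⟨hρ, -⟩, rfl⟩ | ⟨ρ, ⟨-, hσρ, hρσ⟩, rfl⟩)
    · exact card_image_castSucc ρ ▸ card_le_topCard hρ
    · rw [card_insert_last_image_castSucc]
      exact (card_lt_card (ssubset_of_subset_of_ne subset_union_left fun h =>
        hσρ (union_eq_left.1 h.symm))).trans_le (card_le_topCard hρσ)

open scoped Classical in
theorem sum_faceFinset_stellar {M : Type*} [AddCommMonoid M] (f : Finset (Fin (m + 1)) → M) :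
    ∑ τ ∈ faceFinset (stellar Δ σ), f τ =
      ∑ τ ∈ faceFinset Δ with ¬σ ⊆ τ, f (τ.image Fin.castSucc) +
        ∑ τ ∈ faceFinset Δ with ¬σ ⊆ τ ∧ τ ∪ σ ∈ Δ,
          f (insert (Fin.last m) (τ.image Fin.castSucc)) := by
  have himage : faceFinset (stellar Δ σ) =
      {τ ∈ faceFinset Δ | ¬σ ⊆ τ}.image (image Fin.castSucc) ∪
        {τ ∈ faceFinset Δ | ¬σ ⊆ τ ∧ τ ∪ σ ∈ Δ}.image
          fun τ => insert (Fin.last m) (τ.image Fin.castSucc) := by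
    ext
    simp only [mem_faceFinset, stellar, mem_union, mem_image, mem_filter, Set.mem_union,
      Set.mem_image, Set.mem_ofPred_eq]
  have hinj : Function.Injective (image (Fin.castSucc : Fin m → Fin (m + 1))) :=
    image_injective (Fin.castSucc_injective m)
  rw [himage, sum_union, sum_image hinj.injOn, sum_image]
  · intro ρ _ τ _ h
    exact hinj (by simpa [last_notMem_image_castSucc] using congrArg (erase · (Fin.last m)) h)
  · refine disjoint_left.2 ?_
    simp only [mem_image]
    rintro _ ⟨ρ, -, rfl⟩ ⟨τ, -, h⟩
    exact last_notMem_image_castSucc ρ (h ▸ mem_insert_self _ _)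

end Stellar

theorem sum_erase_powerset_pow_mul_one_sub_pow {R ι : Type*} [CommRing R] [IsDomain R]
    [DecidableEq ι] (s : Finset ι) :
    ∑ t ∈ s.powerset.erase s, (Polynomial.X : R[X]) ^ #t * (1 - Polynomial.X) ^ (#s - 1 - #t) =
      ∑ i ∈ range #s, Polynomial.X ^ i := by
  have hX : (1 - Polynomial.X : R[X]) ≠ 0 :=
    sub_ne_zero.2 (by simpa using (Polynomial.X_ne_C (1 : R)).symm)
  refine mul_right_cancel₀ hX ?_
  have hbinom := sum_pow_mul_eq_add_pow (Polynomial.X : R[X]) (1 - Polynomial.X) s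
  rw [add_sub_cancel, one_pow, ← sum_erase_add _ _ (mem_powerset_self s), Nat.sub_self, pow_zero,
    mul_one, ← eq_sub_iff_add_eq] at hbinom
  rw [geom_sum_mul_neg, ← hbinom, sum_mul]
  refine sum_congr rfl fun t ht => ?_
  rw [mem_erase, mem_powerset] at ht
  have : #t < #s := card_lt_card (ht.2.ssubset_of_ne ht.1)
  rw [mul_assoc, ← pow_succ]
  congr 2
  omega

theorem mul_geom_sum_eq_pow_add_sum_Icc {R : Type*} [Semiring R] (x : R) {d : ℕ} (hd : 1 ≤ d) :
    x * ∑ i ∈ range d, x ^ i = x ^ d + ∑ i ∈ Icc 1 (d - 1), x ^ i := by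
  obtain ⟨e, rfl⟩ := Nat.exists_eq_add_of_le' hd
  induction e with
  | zero => simp
  | succ e ih =>
    rw [sum_range_succ, mul_add, ih (by omega), Nat.add_sub_cancel, Nat.add_sub_cancel,
      sum_Icc_succ_top (by omega), ← pow_succ']
    abel

section HPoly

variable {m : ℕ} {Δ : Set (Finset (Fin m))} {σ : Finset (Fin m)}

theorem hPoly_eq_add_pow_mul_hPoly_link (hΔ : IsComplex Δ) (hpure : IsPure Δ) (hσ : σ ∈ Δ) :
    hPoly Δ =
      ∑ τ ∈ faceFinset Δ with ¬σ ⊆ τ,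
          Polynomial.X ^ #τ * (1 - Polynomial.X) ^ (topCard Δ - #τ) +
        Polynomial.X ^ #σ * hPoly (link Δ σ) := by
  rw [hPoly_eq_sum_faceFinset (hΔ.2 hσ (empty_subset σ)), sum_faceFinset_eq_add_sum_link (σ := σ),
    hPoly_eq_sum_faceFinset (empty_mem_link hσ), topCard_link hpure hσ, mul_sum]
  congr 1
  refine sum_congr rfl fun ρ hρ => ?_
  have hρn := card_add_card_le_topCard_of_mem_link (mem_faceFinset.1 hρ)
  rw [card_union_of_disjoint (mem_faceFinset.1 hρ).1, pow_add,
    show topCard Δ - (#ρ + #σ) = topCard Δ - #σ - #ρ by omega]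
  ring

theorem hPoly_stellar_eq_add_mul_hPoly_link (hΔ : IsComplex Δ) (hpure : IsPure Δ) (hσ : σ ∈ Δ)
    (hσ₀ : σ.Nonempty) :
    hPoly (stellar Δ σ) =
      ∑ τ ∈ faceFinset Δ with ¬σ ⊆ τ,
          Polynomial.X ^ #τ * (1 - Polynomial.X) ^ (topCard Δ - #τ) +
        Polynomial.X * (∑ α ∈ σ.powerset.erase σ,
          Polynomial.X ^ #α * (1 - Polynomial.X) ^ (#σ - 1 - #α)) * hPoly (link Δ σ) := by
  classical
  rw [hPoly_eq_sum_faceFinset (empty_mem_stellar hΔ hσ hσ₀), topCard_stellar hΔ hpure hσ hσ₀,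
    sum_faceFinset_stellar, sum_filter_eq_sum_ssubset_sum_link hΔ,
    hPoly_eq_sum_faceFinset (empty_mem_link hσ), topCard_link hpure hσ, mul_assoc, sum_mul_sum,
    mul_sum]
  congr 1
  · simp only [card_image_castSucc]
  refine sum_congr rfl fun α hα => ?_
  rw [mul_sum]
  refine sum_congr rfl fun ρ hρ => ?_
  rw [mem_erase, mem_powerset] at hα
  have hασ : #α < #σ := card_lt_card (hα.2.ssubset_of_ne hα.1)
  have hρn := card_add_card_le_topCard_of_mem_link (mem_faceFinset.1 hρ)
  have hαρ : Disjoint α ρ := disjoint_of_subset_left hα.2 (mem_faceFinset.1 hρ).1.symm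
  rw [card_insert_last_image_castSucc, card_union_of_disjoint hαρ,
    show topCard Δ - (#α + #ρ + 1) = (#σ - 1 - #α) + (topCard Δ - #σ - #ρ) by omega]
  ring

end HPoly

/-- `h`-polynomial of a stellar subdivision of a pure complex:
`h(Δ_σ, t) = h(Δ, t) + (t + t² + ⋯ + t^{d−1})·h(lk_Δ(σ), t)` where `d − 1 = dim σ`. -/
theorem hPoly_stellar {m : ℕ} (Δ : Set (Finset (Fin m)))
    (hΔ : IsComplex Δ) (hpure : IsPure Δ)
    (σ : Finset (Fin m)) (hσ : σ ∈ Δ) (hcard : 2 ≤ σ.card) :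
    hPoly (stellar Δ σ) =
      hPoly Δ + (∑ i ∈ Finset.Icc 1 (σ.card - 1), (Polynomial.X : Polynomial ℤ) ^ i) *
        hPoly (link Δ σ) := by
  rw [hPoly_stellar_eq_add_mul_hPoly_link hΔ hpure hσ (card_pos.1 (by omega)),
    hPoly_eq_add_pow_mul_hPoly_link hΔ hpure hσ, sum_erase_powerset_pow_mul_one_sub_pow,
    mul_geom_sum_eq_pow_add_sum_Icc _ (by omega)]
  ring
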